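/- Let X be a connected finite preordered set, R 2-torsion free, and L a Lie derivation of I(X,R). Writing L(e_{ij}) = Σ C^{ij}_{xy} e_{xy}, one has C^{ij}_{ij} + C^{jk}_{jk} = C^{ik}_{ik} whenever i < j < k and i ≠ k, and C^{ij}_{ij} + C^{ji}_{ji} = 0 whenever i < j and j < i. -/
import Mathlib


open Finset

/-- The standard basis element `e_{xy}` of the incidence algebra:
`e_{xy}(u,v) = 1` if `(u,v) = (x,y)` (and `x ≤ y`), and `0` otherwise. -/
def e (R : Type*) [CommRing R] {X : Type*} [Preorder X] [DecidableEq X]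
    [DecidableRel (α := X) (· ≤ ·)] (x y : X) : IncidenceAlgebra R X :=
  ⟨fun u v => if u = x ∧ v = y ∧ x ≤ y then 1 else 0, fun u v huv => by
    simp only [ite_eq_right_iff, and_imp]
    rintro rfl rfl h
    exact absurd h huv⟩

section helpers
variable {R X : Type*} [CommRing R] [Preorder X] [DecidableEq X]
    [DecidableRel (α := X) (· ≤ ·)] [LocallyFiniteOrder X]

lemma e_apply (x y u v : X) :
    (e R x y) u v = if u = x ∧ v = y ∧ x ≤ y then 1 else 0 := rfl

lemma mul_e_apply (f : IncidenceAlgebra R X) (x y u v : X) :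
    ((f * e R x y : IncidenceAlgebra R X)) u v
      = if v = y ∧ x ≤ y ∧ x ∈ Icc u v then f u x else 0 := by
  rw [IncidenceAlgebra.mul_apply]
  split_ifs with h
  · obtain ⟨rfl, hxy, hmem⟩ := h
    rw [Finset.sum_eq_single_of_mem x hmem]
    · simp [e_apply, hxy]
    · intro z _ hz; simp [e_apply, hz]
  · refine Finset.sum_eq_zero fun z hz => ?_
    rw [e_apply]
    split_ifs with h2
    · exact absurd ⟨h2.2.1, h2.2.2, h2.1 ▸ hz⟩ h
    · exact mul_zero _

lemma e_mul_apply (f : IncidenceAlgebra R X) (x y u v : X) :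
    ((e R x y * f : IncidenceAlgebra R X)) u v
      = if u = x ∧ x ≤ y ∧ y ∈ Icc u v then f y v else 0 := by
  rw [IncidenceAlgebra.mul_apply]
  split_ifs with h
  · obtain ⟨rfl, hxy, hmem⟩ := h
    rw [Finset.sum_eq_single_of_mem y hmem]
    · simp [e_apply, hxy]
    · intro z _ hz; simp [e_apply, hz]
  · refine Finset.sum_eq_zero fun z hz => ?_
    rw [e_apply]
    split_ifs with h2
    · exact absurd ⟨h2.1, h2.2.2, h2.2.1 ▸ hz⟩ h
    · exact zero_mul _

lemma e_mul_e_same {x y v : X} (hxy : x ≤ y) (hyv : y ≤ v) :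
    (e R x y * e R y v : IncidenceAlgebra R X) = e R x v := by
  ext a b hab
  rw [mul_e_apply, e_apply]
  by_cases hax : a = x
  · by_cases hbv : b = v
    · subst hax; subst hbv
      simp [e_apply, hxy, hyv, Finset.mem_Icc, hxy.trans hyv]
    · simp [e_apply, hbv]
  · simp [e_apply, hax]

lemma e_mul_e_ne {x y u v : X} (h : y ≠ u) :
    (e R x y * e R u v : IncidenceAlgebra R X) = 0 := by
  ext a b _
  rw [mul_e_apply]
  have : u ≠ y := Ne.symm h
  simp [e_apply, this]

end helpers

/-- For a Lie derivation `L` of the incidence algebra of a connected finite preordered set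
over a 2-torsion free commutative ring, with coefficients `C^{ij}_{xy} = L(e_{ij})(x,y)`,
one has `C^{ij}_{ij} + C^{jk}_{jk} = C^{ik}_{ik}` whenever `i < j < k` with `i ≠ k`,
and `C^{ij}_{ij} + C^{ji}_{ji} = 0` whenever `i < j` and `j < i`. -/
theorem lieDer_coeff_cocycle {R X : Type*} [CommRing R] [Preorder X]
    [Fintype X] [DecidableEq X] [DecidableRel (α := X) (· ≤ ·)] [LocallyFiniteOrder X]
    (htf : ∀ r : R, r + r = 0 → r = 0)
    (hconn : ∀ x y : X, Relation.ReflTransGen (fun a b : X => a ≤ b ∨ b ≤ a) x y)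
    (L : IncidenceAlgebra R X →ₗ[R] IncidenceAlgebra R X)
    (hL : ∀ f g : IncidenceAlgebra R X,
      L (f * g - g * f) = (L f * g - g * L f) + (f * L g - L g * f)) :
    (∀ i j k : X, i ≤ j → i ≠ j → j ≤ k → j ≠ k → i ≠ k →
      L (e R i j) i j + L (e R j k) j k = L (e R i k) i k) ∧
    (∀ i j : X, i ≤ j → j ≤ i → i ≠ j →
      L (e R i j) i j + L (e R j i) j i = 0) := by
  classical
  -- Diagonal invariance lemmas
  have hAA : ∀ a b : X, a ≤ b → a ≠ b → L (e R a a) a a = L (e R a a) b b := by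
    intro a b hab hne
    have key := hL (e R a a) (e R a b)
    rw [e_mul_e_same le_rfl hab, e_mul_e_ne (Ne.symm hne), sub_zero] at key
    have h2 := congrFun (DFunLike.congr_fun key a) b
    have hba : ¬ b = a := Ne.symm hne
    simp only [IncidenceAlgebra.add_apply, IncidenceAlgebra.sub_apply, mul_e_apply,
      e_mul_apply, Finset.mem_Icc, hab, le_refl, hba, true_and, and_true, and_self,
      if_true, if_false, false_and, if_neg (by simp [hba] : ¬(b = a ∧ a ≤ a ∧ a ≤ a ∧ a ≤ b))] at h2
    linear_combination -h2
  have hBB : ∀ a b : X, a ≤ b → a ≠ b → L (e R b b) a a = L (e R b b) b b := by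
    intro a b hab hne
    have key := hL (e R a b) (e R b b)
    rw [e_mul_e_same hab le_rfl, e_mul_e_ne (Ne.symm hne), sub_zero] at key
    have h2 := congrFun (DFunLike.congr_fun key a) b
    have hab' : ¬ a = b := hne
    simp only [IncidenceAlgebra.add_apply, IncidenceAlgebra.sub_apply, mul_e_apply,
      e_mul_apply, Finset.mem_Icc, hab, le_refl, hab', true_and, and_true, and_self,
      if_true, if_false, false_and] at h2
    linear_combination h2
  constructor
  · intro i j k hij hnij hjk hnjk hnik
    have key := hL (e R i j) (e R j k)
    rw [e_mul_e_same hij hjk, e_mul_e_ne (Ne.symm hnik), sub_zero] at key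
    have h2 := congrFun (DFunLike.congr_fun key i) k
    have hij' : ¬ i = j := hnij
    have hkj : ¬ k = j := Ne.symm hnjk
    simp only [IncidenceAlgebra.add_apply, IncidenceAlgebra.sub_apply, mul_e_apply,
      e_mul_apply, Finset.mem_Icc, hij, hjk, hij.trans hjk, le_refl, hij', hkj,
      true_and, and_true, and_self, if_true, if_false, false_and] at h2
    linear_combination -h2
  · intro i j hij hji hne
    have key := hL (e R i j) (e R j i)
    rw [e_mul_e_same hij hji, e_mul_e_same hji hij, map_sub] at key
    have h2 := congrFun (DFunLike.congr_fun key i) i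
    have h3 := congrFun (DFunLike.congr_fun key j) j
    have hij' : ¬ i = j := hne
    have hji' : ¬ j = i := Ne.symm hne
    simp only [IncidenceAlgebra.add_apply, IncidenceAlgebra.sub_apply, mul_e_apply,
      e_mul_apply, Finset.mem_Icc, hij, hji, le_refl, hij', hji',
      true_and, and_true, and_self, if_true, if_false, false_and] at h2 h3
    have hA := hAA i j hij hne
    have hB := hBB i j hij hne
    refine htf _ ?_
    linear_combination -h2 + h3 + hA - hB
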